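/- For complex numbers a₂, a₃, a₄ expressible as a₂ = 2ω₁₁, a₃ = 2ω₁₃ + 3ω₁₁², a₄ = 2ω₃₃ + 8ω₁₁ω₁₃ + (10/3)ω₁₁³ with |ω₁₁| ≤ 1, |ω₁₃|² + 3|ω₃₃|² ≤ 1/3 and |2ω₁₃ − ω₁₁²| ≤ 1, the quantity Γ₃ = (1/2)(−a₄ + 4a₂a₃ − (10/3)a₂³) satisfies Γ₃ = −ω₃₃ + 2ω₁₁(2ω₁₃ − ω₁₁²) − ω₁₁³ and hence |Γ₃| ≤ 10/3. -/

import Mathlib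

/-!
Rewritten in the Grunsky coefficients, `Γ₃` is a polynomial in `ω₁₁`, `2ω₁₃ - ω₁₁²` and `ω₃₃`,
each of which the Grunsky inequalities bound: `|ω₁₁| ≤ 1`, `|2ω₁₃ - ω₁₁²| ≤ 1`, and
`|ω₃₃| ≤ 1/3` because `3|ω₃₃|² ≤ 1/3`. The triangle inequality then gives
`|Γ₃| ≤ 1/3 + 2 + 1 = 10/3`.
-/

theorem le_one_third_of_sq_add_three_mul_sq_le {x y : ℝ} (h : x ^ 2 + 3 * y ^ 2 ≤ 1 / 3) :
    y ≤ 1 / 3 := by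
  nlinarith [sq_nonneg x]

theorem norm_neg_add_two_mul_mul_sub_pow_three_le {𝕜 : Type*} [RCLike 𝕜] {z v w : 𝕜}
    (hz : ‖z‖ ≤ 1) (hv : ‖v‖ ≤ 1) (hw : ‖w‖ ≤ 1 / 3) :
    ‖-w + 2 * z * v - z ^ 3‖ ≤ 10 / 3 := by
  have hz3 : ‖z‖ ^ 3 ≤ 1 := pow_le_one₀ (norm_nonneg z) hz
  have hzv : ‖z‖ * ‖v‖ ≤ 1 := mul_le_one₀ hz (norm_nonneg v) hv
  calc ‖-w + 2 * z * v - z ^ 3‖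
      ≤ ‖-w‖ + ‖2 * z * v‖ + ‖z ^ 3‖ := norm_sub_le_of_le (norm_add_le _ _) le_rfl
    _ = ‖w‖ + 2 * (‖z‖ * ‖v‖) + ‖z‖ ^ 3 := by
        rw [norm_neg, norm_mul, norm_mul, RCLike.norm_two, norm_pow, mul_assoc]
    _ ≤ 1 / 3 + 2 * 1 + 1 := by gcongr
    _ = 10 / 3 := by norm_num

/-- With `a₂, a₃, a₄` expressed via Grunsky coefficients subject to the Grunsky
inequalities, `Γ₃ = (1/2)(-a₄ + 4a₂a₃ - (10/3)a₂³)` satisfies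
`Γ₃ = -ω₃₃ + 2ω₁₁(2ω₁₃ - ω₁₁²) - ω₁₁³` and hence `|Γ₃| ≤ 10/3`. -/
theorem Gamma3_grunsky (a2 a3 a4 ω11 ω13 ω33 : ℂ)
    (ha2 : a2 = 2 * ω11)
    (ha3 : a3 = 2 * ω13 + 3 * ω11 ^ 2)
    (ha4 : a4 = 2 * ω33 + 8 * ω11 * ω13 + (10 / 3) * ω11 ^ 3)
    (h11 : ‖ω11‖ ≤ 1)
    (h1 : ‖ω13‖ ^ 2 + 3 * ‖ω33‖ ^ 2 ≤ 1 / 3)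
    (h2 : ‖2 * ω13 - ω11 ^ 2‖ ≤ 1) :
    (1 / 2) * (-a4 + 4 * a2 * a3 - (10 / 3) * a2 ^ 3) =
        -ω33 + 2 * ω11 * (2 * ω13 - ω11 ^ 2) - ω11 ^ 3 ∧
      ‖(1 / 2) * (-a4 + 4 * a2 * a3 - (10 / 3) * a2 ^ 3)‖ ≤ 10 / 3 := by
  have hΓ : (1 / 2) * (-a4 + 4 * a2 * a3 - (10 / 3) * a2 ^ 3) =
      -ω33 + 2 * ω11 * (2 * ω13 - ω11 ^ 2) - ω11 ^ 3 := by
    subst ha2 ha3 ha4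
    ring
  refine ⟨hΓ, hΓ ▸ ?_⟩
  exact norm_neg_add_two_mul_mul_sub_pow_three_le h11 h2
    (le_one_third_of_sq_add_three_mul_sq_le h1)
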